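/- Uniqueness step for the dissipative parabolic Crank–Nicolson scheme: if V ∈ S_h satisfies (1/k)(V,φ) = [(ε/k)V(1) + (δ/2)V(1)] φ(1) − (a/2) (V',φ') + (1/2)(β V,φ) for all φ ∈ S_h, with ε ≤ 0, a > 0, δ ∈ ℝ, β bounded, and k (‖β‖_∞ + δ²/a) < 2, then V = 0. -/

import Mathlib

open MeasureTheory intervalIntegral Set

/-!
Test the equation with `φ = V`. Since `V 0 = 0`, the boundary value is an integral,
`V 1 ^ 2 = ∫ 2 V V'`, so by Young's inequality
`(δ/2) V 1 ^ 2 ≤ (a/2)‖V'‖² + (δ²/2a)‖V‖²`, and the gradient term absorbs the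
derivative part. The `ε`-term has the good sign and the `β`-term is at most
`(M/2)‖V‖²`, which leaves `(1/k)‖V‖² ≤ ((M + δ²/a)/2)‖V‖²`. The step-size condition
forces `‖V‖ = 0`, and a continuous function with zero `L²` norm vanishes on the interval.
-/

theorem mul_le_half_mul_sq_add_sq_div {c : ℝ} (hc : 0 < c) (δ u v : ℝ) :
    δ * (u * v) ≤ c / 2 * v ^ 2 + δ ^ 2 / (2 * c) * u ^ 2 := by
  have hsq : c / 2 * v ^ 2 + δ ^ 2 / (2 * c) * u ^ 2 - δ * (u * v) =
      (c * v - δ * u) ^ 2 / (2 * c) := by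
    field_simp
    ring
  have : 0 ≤ (c * v - δ * u) ^ 2 / (2 * c) := by positivity
  linarith

section

variable {f : ℝ → ℝ}

theorem integral_two_mul_mul_deriv (hf : ContDiff ℝ 1 f) (a b : ℝ) :
    ∫ x in a..b, 2 * (f x * deriv f x) = f b ^ 2 - f a ^ 2 := by
  have hd : ∀ x, HasDerivAt f (deriv f x) x := fun x =>
    (hf.differentiable one_ne_zero x).hasDerivAt
  have hi : IntervalIntegrable (deriv f) volume a b :=
    (hf.continuous_deriv le_rfl).intervalIntegrable a b
  rw [sq, sq, ← integral_deriv_mul_eq_sub (fun x _ => hd x) (fun x _ => hd x) hi hi]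
  congr 1
  ext x
  ring

theorem half_mul_sq_sub_sq_le_integral_sq (hf : ContDiff ℝ 1 f) {a b c : ℝ} (hab : a ≤ b)
    (hc : 0 < c) (δ : ℝ) :
    δ / 2 * (f b ^ 2 - f a ^ 2) ≤
      c / 2 * (∫ x in a..b, deriv f x ^ 2) + δ ^ 2 / (2 * c) * ∫ x in a..b, f x ^ 2 := by
  have hfc : Continuous f := hf.continuous
  have hf'c : Continuous (deriv f) := hf.continuous_deriv le_rfl
  calc δ / 2 * (f b ^ 2 - f a ^ 2) = ∫ x in a..b, δ * (f x * deriv f x) := by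
        rw [← integral_two_mul_mul_deriv hf, ← intervalIntegral.integral_const_mul]
        congr 1
        ext x
        ring
    _ ≤ ∫ x in a..b, (c / 2 * deriv f x ^ 2 + δ ^ 2 / (2 * c) * f x ^ 2) :=
        integral_mono_on hab (Continuous.intervalIntegrable (by fun_prop) a b)
          (Continuous.intervalIntegrable (by fun_prop) a b)
          fun x _ => mul_le_half_mul_sq_add_sq_div hc δ (f x) (deriv f x)
    _ = c / 2 * (∫ x in a..b, deriv f x ^ 2) + δ ^ 2 / (2 * c) * ∫ x in a..b, f x ^ 2 := by
        rw [intervalIntegral.integral_add (Continuous.intervalIntegrable (by fun_prop) a b)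
            (Continuous.intervalIntegrable (by fun_prop) a b),
          intervalIntegral.integral_const_mul, intervalIntegral.integral_const_mul]

theorem eqOn_zero_of_integral_sq_eq_zero {a b : ℝ} (hab : a < b) (hf : ContinuousOn f (Icc a b))
    (h : ∫ x in a..b, f x ^ 2 = 0) : EqOn f 0 (Icc a b) := by
  have hf2 : ContinuousOn (fun x => f x ^ 2) (Icc a b) := hf.pow 2
  rw [integral_of_le hab.le, ← integral_Icc_eq_integral_Ioc,
    setIntegral_eq_zero_iff_of_nonneg_ae (ae_of_all _ fun x => sq_nonneg (f x))
      hf2.integrableOn_Icc] at h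
  intro x hx
  exact pow_eq_zero_iff two_ne_zero |>.1
    (Measure.eqOn_Icc_of_ae_eq volume hab.ne h hf2 continuousOn_const hx)

end

theorem integral_mul_le_of_abs_le {β g : ℝ → ℝ} {a b M : ℝ} (hab : a ≤ b)
    (hβ : ∀ x ∈ Icc a b, |β x| ≤ M) (hg : IntervalIntegrable g volume a b)
    (hg0 : ∀ x ∈ Icc a b, 0 ≤ g x) :
    ∫ x in a..b, β x * g x ≤ M * ∫ x in a..b, g x := by
  by_cases hβg : IntervalIntegrable (fun x => β x * g x) volume a b
  · rw [← intervalIntegral.integral_const_mul]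
    exact integral_mono_on hab hβg (hg.const_mul M) fun x hx =>
      mul_le_mul_of_nonneg_right ((le_abs_self _).trans (hβ x hx)) (hg0 x hx)
  · -- `β` need not be measurable, and then the left side is the junk value `0`.
    rw [intervalIntegral.integral_undef hβg]
    exact mul_nonneg ((abs_nonneg _).trans (hβ a (left_mem_Icc.2 hab)))
      (intervalIntegral.integral_nonneg hab hg0)

theorem parabolic_CN_uniqueness_general
    (S : Submodule ℝ (ℝ → ℝ))
    (hS0 : ∀ φ ∈ S, φ 0 = 0)
    (k a δ ε M : ℝ) (hk : 0 < k) (ha : 0 < a) (hε : ε ≤ 0)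
    (β : ℝ → ℝ) (hβ : ∀ x ∈ Set.Icc (0:ℝ) 1, |β x| ≤ M)
    (hsmall : k * (M + δ ^ 2 / a) < 2)
    (V : ℝ → ℝ) (hV : V ∈ S) (hVc : ContDiff ℝ 1 V)
    (heq : ∀ φ, φ ∈ S →
      (1 / k) * (∫ x in (0:ℝ)..1, V x * φ x) =
        (ε / k + δ / 2) * V 1 * φ 1
          - (a / 2) * (∫ x in (0:ℝ)..1, deriv V x * deriv φ x)
          + (1 / 2) * (∫ x in (0:ℝ)..1, β x * V x * φ x)) :
    ∀ x ∈ Set.Icc (0:ℝ) 1, V x = 0 := by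
  have hE := heq V hV
  simp only [mul_assoc, ← sq] at hE
  have hV0 : V 0 = 0 := hS0 V hV
  have hboundary := half_mul_sq_sub_sq_le_integral_sq hVc zero_le_one ha δ
  rw [hV0] at hboundary
  have hpotential := integral_mul_le_of_abs_le (g := fun x => V x ^ 2) zero_le_one hβ
    ((hVc.continuous.pow 2).intervalIntegrable 0 1) fun x _ => sq_nonneg (V x)
  have hdissipation : ε / k * V 1 ^ 2 ≤ 0 :=
    mul_nonpos_of_nonpos_of_nonneg (div_nonpos_of_nonpos_of_nonneg hε hk.le) (sq_nonneg _)
  have hnorm_nonneg : 0 ≤ ∫ x in (0:ℝ)..1, V x ^ 2 :=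
    intervalIntegral.integral_nonneg zero_le_one fun x _ => sq_nonneg (V x)
  have henergy : (1 / k) * (∫ x in (0:ℝ)..1, V x ^ 2) ≤
      (M + δ ^ 2 / a) / 2 * ∫ x in (0:ℝ)..1, V x ^ 2 := by
    rw [show δ ^ 2 / (2 * a) = δ ^ 2 / a / 2 by ring] at hboundary
    linarith
  have hnorm : ∫ x in (0:ℝ)..1, V x ^ 2 = 0 := by
    rw [one_div, ← div_eq_inv_mul, div_le_iff₀ hk] at henergy
    nlinarith
  exact fun x hx =>
    eqOn_zero_of_integral_sq_eq_zero zero_lt_one hVc.continuous.continuousOn hnorm hx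

/-- uniqueness step for the dissipative parabolic Crank–Nicolson scheme:
if `V ∈ S_h` (real finite element space, elements vanishing at 0) solves the homogeneous CN
equation with `ε ≤ 0`, `a > 0` and `k(‖β‖_∞ + δ²/a) < 2`, then `V = 0` (on `[0,1]`). -/
theorem parabolic_CN_uniqueness
    (S : Submodule ℝ (ℝ → ℝ)) (hfin : FiniteDimensional ℝ S)
    (hS0 : ∀ φ ∈ S, φ 0 = 0)
    (k a δ ε M : ℝ) (hk : 0 < k) (ha : 0 < a) (hε : ε ≤ 0)
    (β : ℝ → ℝ) (hβ : ∀ x ∈ Set.Icc (0:ℝ) 1, |β x| ≤ M)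
    (hsmall : k * (M + δ ^ 2 / a) < 2)
    (V : ℝ → ℝ) (hV : V ∈ S) (hVc : ContDiff ℝ 1 V)
    (heq : ∀ φ, φ ∈ S →
      (1 / k) * (∫ x in (0:ℝ)..1, V x * φ x) =
        (ε / k + δ / 2) * V 1 * φ 1
          - (a / 2) * (∫ x in (0:ℝ)..1, deriv V x * deriv φ x)
          + (1 / 2) * (∫ x in (0:ℝ)..1, β x * V x * φ x)) :
    ∀ x ∈ Set.Icc (0:ℝ) 1, V x = 0 :=
  parabolic_CN_uniqueness_general S hS0 k a δ ε M hk ha hε β hβ hsmall V hV hVc heq
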